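/- arXiv:0804.2155 — 5 statements merged into one kernel-verified Lean document; each statement's English description precedes it below -/
import Mathlib

section
/- Let (μ_n) be a sequence of probability measures on a measurable space, and let A, B, C be measurable sets. Define the conditional probability cond(μ, X, Y) to be μ(X ∩ Y)/μ(Y) if μ(Y) > 0, and 1 if μ(Y) = 0. If the sequences n ↦ cond(μ_n, A, C) and n ↦ cond(μ_n, B, C) both converge super-polynomially to 1, then so does n ↦ cond(μ_n, A ∩ B, C). (Soundness of the AND rule / axiom C2 for super-polynomial semantics.) -/
/- The AND rule is the Bonferroni inequality `P(A ∩ B | C) ≥ P(A | C) + P(B | C) - 1`: the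
failure probabilities add up, and splitting a polynomial error budget `1/p` into two halves
`1/(2p)` keeps it polynomial. -/

open MeasureTheory Filter Set

/-- Super-polynomial convergence to 1: for every polynomial with nonnegative
coefficients and at least one nonzero coefficient, eventually `a n ≥ 1 - 1/p(n)`. -/
def SuperPoly (a : ℕ → ℝ) : Prop :=
  ∀ p : Polynomial ℝ, (∀ i, 0 ≤ p.coeff i) → p ≠ 0 →
    ∃ N : ℕ, ∀ n ≥ N, a n ≥ 1 - 1 / p.eval (n : ℝ)

/-- Conditional probability with the convention `condProb μ X Y = 1` when `μ Y = 0`. -/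
noncomputable def condProb {Ω : Type*} [MeasurableSpace Ω] (μ : Measure Ω) (X Y : Set Ω) : ℝ :=
  if μ Y = 0 then 1 else (μ (X ∩ Y)).toReal / (μ Y).toReal

section Bonferroni

variable {Ω : Type*} [MeasurableSpace Ω] (μ : Measure Ω) (A B C : Set Ω)

theorem measure_inter_add_measure_inter_le (hB : MeasurableSet B) :
    μ (A ∩ C) + μ (B ∩ C) ≤ μ (A ∩ B ∩ C) + μ C := by
  have hsplitAC : μ (A ∩ C ∩ B) + μ ((A ∩ C) \ B) = μ (A ∩ C) := measure_inter_add_sdiff _ hB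
  have hsplitC : μ (C ∩ B) + μ (C \ B) = μ C := measure_inter_add_sdiff _ hB
  have hdiff : μ ((A ∩ C) \ B) ≤ μ (C \ B) :=
    measure_mono (sdiff_subset_sdiff_left inter_subset_right)
  rw [← hsplitAC, ← hsplitC, inter_right_comm A C B, inter_comm C B]
  calc μ (A ∩ B ∩ C) + μ ((A ∩ C) \ B) + μ (B ∩ C)
      ≤ μ (A ∩ B ∩ C) + μ (C \ B) + μ (B ∩ C) := by gcongr
    _ = μ (A ∩ B ∩ C) + (μ (B ∩ C) + μ (C \ B)) := by ring

theorem condProb_add_condProb_le [IsFiniteMeasure μ] (hB : MeasurableSet B) :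
    condProb μ A C + condProb μ B C ≤ condProb μ (A ∩ B) C + 1 := by
  unfold condProb
  split_ifs with hC0
  · norm_num
  have hC : 0 < (μ C).toReal := ENNReal.toReal_pos hC0 (measure_ne_top μ C)
  have key := ENNReal.toReal_mono (by finiteness) (measure_inter_add_measure_inter_le μ A B C hB)
  rw [ENNReal.toReal_add (by finiteness) (by finiteness),
    ENNReal.toReal_add (by finiteness) (by finiteness)] at key
  rw [← add_div, div_add_one hC.ne', div_le_div_iff_of_pos_right hC]
  exact key

end Bonferroni

namespace SuperPoly

variable {a b c : ℕ → ℝ}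

theorem mono (ha : SuperPoly a) (hac : ∀ n, a n ≤ c n) : SuperPoly c := fun p hp hp0 =>
  (ha p hp hp0).imp fun _ hN n hn => (hN n hn).trans (hac n)

theorem add_sub_one (ha : SuperPoly a) (hb : SuperPoly b) :
    SuperPoly fun n => a n + b n - 1 := by
  intro p hp hp0
  have h2p : ∀ i, 0 ≤ (2 * p).coeff i := fun i => by
    rw [Polynomial.coeff_ofNat_mul]
    linarith [hp i]
  have h2p0 : (2 : Polynomial ℝ) * p ≠ 0 := by simp [hp0]
  obtain ⟨Na, hNa⟩ := ha (2 * p) h2p h2p0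
  obtain ⟨Nb, hNb⟩ := hb (2 * p) h2p h2p0
  refine ⟨max Na Nb, fun n hn => ?_⟩
  have hna := hNa n (le_of_max_le_left hn)
  have hnb := hNb n (le_of_max_le_right hn)
  simp only [Polynomial.eval_mul, Polynomial.eval_ofNat] at hna hnb
  have halves : 1 / (2 * p.eval (n : ℝ)) + 1 / (2 * p.eval (n : ℝ)) = 1 / p.eval (n : ℝ) := by ring
  linarith

end SuperPoly

theorem stmt_2_general {Ω : Type*} [MeasurableSpace Ω] (μ : ℕ → Measure Ω)
    (hμ : ∀ n, IsProbabilityMeasure (μ n))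
    (A B C : Set Ω) (hB : MeasurableSet B)
    (h1 : SuperPoly (fun n => condProb (μ n) A C))
    (h2 : SuperPoly (fun n => condProb (μ n) B C)) :
    SuperPoly (fun n => condProb (μ n) (A ∩ B) C) :=
  (h1.add_sub_one h2).mono fun n => by
    have := hμ n
    linarith [condProb_add_condProb_le (μ n) A B C hB]

theorem stmt_2 {Ω : Type*} [MeasurableSpace Ω] (μ : ℕ → Measure Ω)
    (hμ : ∀ n, IsProbabilityMeasure (μ n))
    (A B C : Set Ω) (hA : MeasurableSet A) (hB : MeasurableSet B)
    (hC : MeasurableSet C)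
    (h1 : SuperPoly (fun n => condProb (μ n) A C))
    (h2 : SuperPoly (fun n => condProb (μ n) B C)) :
    SuperPoly (fun n => condProb (μ n) (A ∩ B) C) :=
  stmt_2_general μ hμ A B C hB h1 h2
end

section
/- Let (μ_n) be a sequence of probability measures and A, B₁, B₂ measurable sets. With the convention that cond(μ, X, Y) = 1 when μ(Y) = 0, if n ↦ cond(μ_n, A, B₁) and n ↦ cond(μ_n, A, B₂) both converge super-polynomially to 1, then so does n ↦ cond(μ_n, A, B₁ ∪ B₂). (Soundness of the OR rule / axiom C3 for super-polynomial semantics.) -/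
open MeasureTheory Filter Set

/-! The failure probability `1 - cond(μ, A, B) = μ(B \ A) / μ(B)` is subadditive in `B`, since
`μ((B₁ ∪ B₂) \ A) ≤ μ(B₁ \ A) + μ(B₂ \ A)` and `μ(Bᵢ) ≤ μ(B₁ ∪ B₂)`. Super-polynomial convergence
to `1` is a bound `1/p(n)` on the failure probability, so it survives adding two failure
probabilities: bound each by `1/(2p(n))`. -/

theorem SuperPoly.of_one_sub_le_add {a b c : ℕ → ℝ} (ha : SuperPoly a) (hb : SuperPoly b)
    (hc : ∀ n, 1 - c n ≤ (1 - a n) + (1 - b n)) : SuperPoly c := by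
  intro p hp hp0
  have h2p_coeff : ∀ i, 0 ≤ ((2 : ℝ) • p).coeff i := fun i => by
    rw [Polynomial.coeff_smul, smul_eq_mul]
    exact mul_nonneg zero_le_two (hp i)
  have h2p_ne : (2 : ℝ) • p ≠ 0 := smul_ne_zero two_ne_zero hp0
  obtain ⟨N₁, hN₁⟩ := ha _ h2p_coeff h2p_ne
  obtain ⟨N₂, hN₂⟩ := hb _ h2p_coeff h2p_ne
  refine ⟨max N₁ N₂, fun n hn => ?_⟩
  have hna := hN₁ n (le_of_max_le_left hn)
  have hnb := hN₂ n (le_of_max_le_right hn)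
  rw [Polynomial.eval_smul, smul_eq_mul] at hna hnb
  have halve : 1 / (2 * p.eval (n : ℝ)) + 1 / (2 * p.eval (n : ℝ)) = 1 / p.eval (n : ℝ) := by
    ring
  linarith [hc n]

section FiniteMeasure

variable {Ω : Type*} [MeasurableSpace Ω] (μ : Measure Ω) [IsFiniteMeasure μ]

theorem one_sub_condProb {A : Set Ω} (hA : MeasurableSet A) (B : Set Ω) :
    1 - condProb μ A B = μ.real (B \ A) / μ.real B := by
  have hsplit : μ.real (B ∩ A) + μ.real (B \ A) = μ.real B := measureReal_inter_add_sdiff hA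
  rw [condProb]
  split_ifs with hB
  · simp [Measure.real, hB, measure_mono_null sdiff_subset hB]
  · have hB_pos : 0 < μ.real B := ENNReal.toReal_pos hB (measure_ne_top μ B)
    rw [← measureReal_def, ← measureReal_def, inter_comm, eq_div_iff hB_pos.ne', sub_mul,
      div_mul_cancel₀ _ hB_pos.ne']
    linarith

theorem measureReal_div_le_div_of_subset {t s u : Set Ω} (hts : t ⊆ s) (hsu : s ⊆ u) :
    μ.real t / μ.real u ≤ μ.real t / μ.real s := by
  rcases (measureReal_nonneg : 0 ≤ μ.real s).eq_or_lt with hs | hs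
  · have ht : μ.real t = 0 := le_antisymm (hs ▸ measureReal_mono hts) measureReal_nonneg
    simp [ht]
  · exact div_le_div_of_nonneg_left measureReal_nonneg hs (measureReal_mono hsu)

theorem one_sub_condProb_union_le {A : Set Ω} (hA : MeasurableSet A) (B₁ B₂ : Set Ω) :
    1 - condProb μ A (B₁ ∪ B₂) ≤ (1 - condProb μ A B₁) + (1 - condProb μ A B₂) := by
  simp only [one_sub_condProb μ hA]
  calc μ.real ((B₁ ∪ B₂) \ A) / μ.real (B₁ ∪ B₂)
      ≤ (μ.real (B₁ \ A) + μ.real (B₂ \ A)) / μ.real (B₁ ∪ B₂) := by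
        rw [union_sdiff_distrib]
        gcongr
        exact measureReal_union_le _ _
    _ = μ.real (B₁ \ A) / μ.real (B₁ ∪ B₂) + μ.real (B₂ \ A) / μ.real (B₁ ∪ B₂) := add_div ..
    _ ≤ μ.real (B₁ \ A) / μ.real B₁ + μ.real (B₂ \ A) / μ.real B₂ :=
        add_le_add (measureReal_div_le_div_of_subset μ sdiff_subset subset_union_left)
          (measureReal_div_le_div_of_subset μ sdiff_subset subset_union_right)

end FiniteMeasure

theorem stmt_4_general {Ω : Type*} [MeasurableSpace Ω] (μ : ℕ → Measure Ω)
    (hμ : ∀ n, IsProbabilityMeasure (μ n))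
    (A B₁ B₂ : Set Ω) (hA : MeasurableSet A)
    (h1 : SuperPoly (fun n => condProb (μ n) A B₁))
    (h2 : SuperPoly (fun n => condProb (μ n) A B₂)) :
    SuperPoly (fun n => condProb (μ n) A (B₁ ∪ B₂)) :=
  h1.of_one_sub_le_add h2 fun n => one_sub_condProb_union_le (μ n) hA B₁ B₂

theorem stmt_4 {Ω : Type*} [MeasurableSpace Ω] (μ : ℕ → Measure Ω)
    (hμ : ∀ n, IsProbabilityMeasure (μ n))
    (A B₁ B₂ : Set Ω) (hA : MeasurableSet A) (hB₁ : MeasurableSet B₁)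
    (hB₂ : MeasurableSet B₂)
    (h1 : SuperPoly (fun n => condProb (μ n) A B₁))
    (h2 : SuperPoly (fun n => condProb (μ n) A B₂)) :
    SuperPoly (fun n => condProb (μ n) A (B₁ ∪ B₂)) :=
  stmt_4_general μ hμ A B₁ B₂ hA h1 h2
end

section
/- Let (μ_n) be a sequence of probability measures and A, B, C measurable sets. With the convention that cond(μ, X, Y) = 1 when μ(Y) = 0, if n ↦ cond(μ_n, B, A) and n ↦ cond(μ_n, C, A) both converge super-polynomially to 1, then so does n ↦ cond(μ_n, C, A ∩ B). (Soundness of cautious monotonicity / axiom C4 for super-polynomial semantics.) -/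
open MeasureTheory Filter Set

/-! Cautious monotonicity holds pointwise in `n`, with a loss of one in the polynomial:
`P(Cᶜ | A ∩ B) ≤ P(Cᶜ | A) / P(B | A)`, so if both `P(Cᶜ | A)` and `P(Bᶜ | A)` are at most
`1 / (t + 1)` then `P(Cᶜ | A ∩ B) ≤ (1 / (t + 1)) / (t / (t + 1)) = 1 / t`. To beat `1 / p(n)`,
apply the hypotheses to the polynomial `p + 1`. -/

namespace Polynomial

variable {R : Type*} [Semiring R] [PartialOrder R] [IsStrictOrderedRing R] {p : R[X]}

theorem eval_pos_of_coeff_nonneg (hp : ∀ i, 0 ≤ p.coeff i) (hp0 : p ≠ 0) {x : R} (hx : 0 < x) :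
    0 < p.eval x := by
  rw [eval_eq_sum_range]
  refine Finset.sum_pos' (fun i _ => mul_nonneg (hp i) (pow_nonneg hx.le i))
    ⟨p.natDegree, Finset.self_mem_range_succ _, mul_pos ?_ (pow_pos hx _)⟩
  exact (hp _).lt_of_ne (leadingCoeff_ne_zero.mpr hp0).symm

theorem coeff_add_one_nonneg (hp : ∀ i, 0 ≤ p.coeff i) (i : ℕ) : 0 ≤ (p + 1).coeff i := by
  rw [coeff_add, coeff_one]
  split_ifs <;> simp [hp i, add_nonneg]

theorem add_one_ne_zero_of_coeff_nonneg (hp : ∀ i, 0 ≤ p.coeff i) : p + 1 ≠ 0 := fun h =>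
  (lt_add_of_le_of_pos (hp 0) one_pos).ne' (by simpa using congrArg (coeff · 0) h)

end Polynomial

section

variable {Ω : Type*} [MeasurableSpace Ω] {μ : Measure Ω} [IsFiniteMeasure μ]

theorem condProb_eq_one_sub {X Y : Set Ω} (hX : MeasurableSet X) (hY : μ Y ≠ 0) :
    condProb μ X Y = 1 - μ.real (Y \ X) / μ.real Y := by
  have hY' : 0 < μ.real Y := ENNReal.toReal_pos hY (measure_ne_top μ Y)
  rw [condProb, if_neg hY, ← measureReal_def, ← measureReal_def, inter_comm, eq_sub_iff_add_eq,
    ← add_div, measureReal_inter_add_sdiff hX, div_self hY'.ne']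

theorem one_sub_one_div_le_condProb_inter {A B C : Set Ω} (hC : MeasurableSet C) {t : ℝ}
    (ht : 0 < t) (hB : 1 - 1 / (t + 1) ≤ condProb μ B A)
    (hCA : 1 - 1 / (t + 1) ≤ condProb μ C A) :
    1 - 1 / t ≤ condProb μ C (A ∩ B) := by
  by_cases hAB : μ (A ∩ B) = 0
  · simp only [condProb, hAB, if_true]
    linarith [one_div_pos.mpr ht]
  have hA : μ A ≠ 0 := fun h => hAB (measure_mono_null inter_subset_left h)
  have ha : 0 < μ.real A := ENNReal.toReal_pos hA (measure_ne_top μ A)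
  have hb : 0 < μ.real (A ∩ B) := ENNReal.toReal_pos hAB (measure_ne_top μ _)
  rw [condProb_eq_one_sub hC hA] at hCA
  rw [condProb, if_neg hA, ← measureReal_def, ← measureReal_def, inter_comm] at hB
  rw [condProb_eq_one_sub hC hAB, sub_le_sub_iff_left]
  have hd : μ.real (A \ C) ≤ μ.real A / (t + 1) := by
    rw [sub_le_sub_iff_left, div_le_div_iff₀ ha (by positivity)] at hCA
    rw [le_div_iff₀ (by positivity)]
    linarith
  have hab : μ.real A * t / (t + 1) ≤ μ.real (A ∩ B) := by
    rw [le_div_iff₀ ha] at hB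
    calc μ.real A * t / (t + 1) = (1 - 1 / (t + 1)) * μ.real A := by field_simp; ring
      _ ≤ μ.real (A ∩ B) := hB
  calc μ.real ((A ∩ B) \ C) / μ.real (A ∩ B)
      ≤ μ.real A / (t + 1) / (μ.real A * t / (t + 1)) := by
        gcongr ?_ / ?_
        exact (measureReal_mono (sdiff_subset_sdiff_left inter_subset_left)).trans hd
    _ = 1 / t := by field_simp

end

theorem stmt_5_general {Ω : Type*} [MeasurableSpace Ω] (μ : ℕ → Measure Ω)
    (hμ : ∀ n, IsProbabilityMeasure (μ n))
    (A B C : Set Ω)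
    (hC : MeasurableSet C)
    (h1 : SuperPoly (fun n => condProb (μ n) B A))
    (h2 : SuperPoly (fun n => condProb (μ n) C A)) :
    SuperPoly (fun n => condProb (μ n) C (A ∩ B)) := by
  intro p hp hp0
  have hq := p.coeff_add_one_nonneg hp
  have hq0 := p.add_one_ne_zero_of_coeff_nonneg hp
  obtain ⟨N₁, hN₁⟩ := h1 (p + 1) hq hq0
  obtain ⟨N₂, hN₂⟩ := h2 (p + 1) hq hq0
  refine ⟨max (max N₁ N₂) 1, fun n hn => ?_⟩
  simp only [max_le_iff] at hn
  have hpos : 0 < p.eval (n : ℝ) := p.eval_pos_of_coeff_nonneg hp hp0 (by exact_mod_cast hn.2)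
  have := hμ n
  exact one_sub_one_div_le_condProb_inter hC hpos (by simpa using hN₁ n hn.1.1)
    (by simpa using hN₂ n hn.1.2)

theorem stmt_5 {Ω : Type*} [MeasurableSpace Ω] (μ : ℕ → Measure Ω)
    (hμ : ∀ n, IsProbabilityMeasure (μ n))
    (A B C : Set Ω) (hA : MeasurableSet A) (hB : MeasurableSet B)
    (hC : MeasurableSet C)
    (h1 : SuperPoly (fun n => condProb (μ n) B A))
    (h2 : SuperPoly (fun n => condProb (μ n) C A)) :
    SuperPoly (fun n => condProb (μ n) C (A ∩ B)) :=
  stmt_5_general μ hμ A B C hC h1 h2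
end

section
/- Let μ be a probability measure, A, B, C measurable sets with μ(A) > 0 and μ(A ∩ B) > 0, and r₁, r₂ ∈ [0,1]. If μ(B | A) ≥ 1 − r₁ and μ(C | A) ≥ 1 − r₂, then μ(C | A ∩ B) ≥ 1 − (r₁ + r₂). (Soundness of the quantitative cautious monotonicity rule CM^q.) -/
open MeasureTheory Filter Set

theorem stmt_9 {Ω : Type*} [MeasurableSpace Ω] (μ : Measure Ω)
    [IsProbabilityMeasure μ]
    (A B C : Set Ω) (hA : MeasurableSet A) (hB : MeasurableSet B)
    (hC : MeasurableSet C) (hApos : 0 < μ A) (hABpos : 0 < μ (A ∩ B))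
    (r₁ r₂ : ℝ) (hr₁ : r₁ ∈ Set.Icc (0:ℝ) 1) (hr₂ : r₂ ∈ Set.Icc (0:ℝ) 1)
    (hc1 : (μ (B ∩ A)).toReal / (μ A).toReal ≥ 1 - r₁)
    (hc2 : (μ (C ∩ A)).toReal / (μ A).toReal ≥ 1 - r₂) :
    (μ (C ∩ (A ∩ B))).toReal / (μ (A ∩ B)).toReal ≥ 1 - (r₁ + r₂) := by
  have hfinA : μ A ≠ ⊤ := measure_ne_top μ A
  have hfinAB : μ (A ∩ B) ≠ ⊤ := measure_ne_top μ (A ∩ B)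
  set a := (μ A).toReal with ha
  set ab := (μ (A ∩ B)).toReal with hab
  set cab := (μ (C ∩ (A ∩ B))).toReal with hcab
  have apos : 0 < a := ENNReal.toReal_pos hApos.ne' hfinA
  have abpos : 0 < ab := ENNReal.toReal_pos hABpos.ne' hfinAB
  have cabnn : 0 ≤ cab := ENNReal.toReal_nonneg
  rcases le_or_gt 1 (r₁ + r₂) with h1 | h1
  · have : (0:ℝ) ≤ cab / ab := div_nonneg cabnn abpos.le
    linarith
  -- main case
  have hc1' : ab ≥ (1 - r₁) * a := by
    have habBA : ab = (μ (B ∩ A)).toReal := by rw [hab, Set.inter_comm]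
    have h := (le_div_iff₀ apos).mp hc1
    linarith [h, habBA.ge]
  have hc2' : (μ (C ∩ A)).toReal ≥ (1 - r₂) * a := (le_div_iff₀ apos).mp hc2
  -- μ(A \ C) = a - μ(C ∩ A)
  have hsplit : (μ (A ∩ C)).toReal + (μ (A \ C)).toReal = a := by
    rw [← ENNReal.toReal_add (measure_ne_top _ _) (measure_ne_top _ _),
      measure_inter_add_diff A hC]
  have hAC : (μ (A ∩ C)).toReal = (μ (C ∩ A)).toReal := by rw [Set.inter_comm]
  -- key: ab ≤ cab + μ(A \ C)
  have hsub : A ∩ B ⊆ (C ∩ (A ∩ B)) ∪ (A \ C) := by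
    intro x hx
    by_cases hxc : x ∈ C
    · exact Or.inl ⟨hxc, hx⟩
    · exact Or.inr ⟨hx.1, hxc⟩
  have hkey : ab ≤ cab + (μ (A \ C)).toReal := by
    have h1 : μ (A ∩ B) ≤ μ (C ∩ (A ∩ B)) + μ (A \ C) :=
      le_trans (measure_mono hsub) (measure_union_le _ _)
    have := ENNReal.toReal_mono
      (by simp [ENNReal.add_ne_top, measure_ne_top] : μ (C ∩ (A ∩ B)) + μ (A \ C) ≠ ⊤) h1
    rwa [ENNReal.toReal_add (measure_ne_top _ _) (measure_ne_top _ _)] at this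
  rw [ge_iff_le, le_div_iff₀ abpos]
  have hr1a := hr₁.1
  have hr1b := hr₁.2
  have hr2a := hr₂.1
  nlinarith [mul_nonneg hr1a apos.le, mul_nonneg hr2a apos.le]
end

section
/- There exist a sequence of probability measures (μ_n) on a measurable space and a measurable set A such that n ↦ μ_n(A) converges super-polynomially to 1 (so 'true → A' holds), but n ↦ cond(μ_n, A, Aᶜ) does not converge super-polynomially to 1 (so '¬A → A' fails). Hence the monotonicity rule (strengthening the antecedent) is unsound for super-polynomial conditional semantics. -/
open MeasureTheory Filter Set
open scoped ENNReal

lemma poly_pos_of_pos_coeff (p : Polynomial ℝ) (hc : ∀ i, 0 ≤ p.coeff i) (hp : p ≠ 0)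
    {n : ℕ} (hn : 1 ≤ n) : 0 < p.eval (n : ℝ) := by
  obtain ⟨i, hi⟩ : ∃ i, p.coeff i ≠ 0 := by
    by_contra h
    push_neg at h
    exact hp (Polynomial.ext fun i => by simp [h i])
  have hi' : 0 < p.coeff i := lt_of_le_of_ne (hc i) (Ne.symm hi)
  have hid : i ∈ Finset.range (p.natDegree + 1) := by
    simp [Nat.lt_succ_iff, Polynomial.le_natDegree_of_ne_zero hi]
  have hxn : (1:ℝ) ≤ (n:ℝ) := by exact_mod_cast hn
  rw [Polynomial.eval_eq_sum_range]
  have h1 : 0 < p.coeff i * (n:ℝ)^i := by positivity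
  refine lt_of_lt_of_le h1 ?_
  exact Finset.single_le_sum (f := fun j => p.coeff j * (n:ℝ)^j) (fun j _ => mul_nonneg (hc j) (by positivity)) hid

lemma poly_le_two_pow (p : Polynomial ℝ) (hc : ∀ i, 0 ≤ p.coeff i) :
    ∃ N : ℕ, ∀ n ≥ N, p.eval (n : ℝ) ≤ 2 ^ n := by
  set d := p.natDegree
  set C : ℝ := ∑ i ∈ Finset.range (d + 1), p.coeff i with hC
  have hC0 : 0 ≤ C := Finset.sum_nonneg fun i _ => hc i
  have hlo : (fun n : ℕ => ((n:ℝ))^d) =o[atTop] (fun n : ℕ => (2:ℝ)^n) :=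
    isLittleO_pow_const_const_pow_of_one_lt d one_lt_two
  have hb := hlo.def (show (0:ℝ) < 1/(C+1) from one_div_pos.mpr (by linarith))
  rw [eventually_atTop] at hb
  obtain ⟨N, hN⟩ := hb
  refine ⟨max N 1, fun n hn => ?_⟩
  have hn1 : 1 ≤ n := le_trans (le_max_right _ _) hn
  have hnN : N ≤ n := le_trans (le_max_left _ _) hn
  have hxn : (1:ℝ) ≤ (n:ℝ) := by exact_mod_cast hn1
  have h1 : p.eval (n:ℝ) ≤ C * (n:ℝ)^d := by
    rw [Polynomial.eval_eq_sum_range, hC, Finset.sum_mul]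
    refine Finset.sum_le_sum fun i hi => ?_
    have : ((n:ℝ))^i ≤ (n:ℝ)^d :=
      pow_le_pow_right₀ hxn (Nat.lt_succ_iff.mp (Finset.mem_range.mp hi))
    exact mul_le_mul_of_nonneg_left this (hc i)
  have h2 := hN n hnN
  simp only [Real.norm_eq_abs] at h2
  rw [abs_of_nonneg (by positivity), abs_of_nonneg (by positivity)] at h2
  have h3 : C * (n:ℝ)^d ≤ C * (1/(C+1) * 2^n) := mul_le_mul_of_nonneg_left h2 hC0
  refine h1.trans (h3.trans ?_)
  rw [← mul_assoc]
  have : C * (1/(C+1)) ≤ 1 := by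
    rw [mul_one_div, div_le_one (by positivity)]; linarith
  calc C * (1/(C+1)) * 2^n ≤ 1 * 2^n := by
        exact mul_le_mul_of_nonneg_right this (by positivity)
    _ = 2^n := one_mul _

theorem stmt_13 :
    ∃ (Ω : Type) (_ : MeasurableSpace Ω) (μ : ℕ → Measure Ω) (A : Set Ω),
      (∀ n, IsProbabilityMeasure (μ n)) ∧ MeasurableSet A ∧
      SuperPoly (fun n => (μ n A).toReal) ∧
      ¬ SuperPoly (fun n => condProb (μ n) A Aᶜ) := by
  classical
  refine ⟨Bool, inferInstance,
    fun n => ((1:ℝ≥0∞) - 2⁻¹^n) • Measure.dirac true + (2⁻¹^n : ℝ≥0∞) • Measure.dirac false,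
    {true}, ?_, measurableSet_singleton true, ?_, ?_⟩
  · intro n
    constructor
    have hle : (2⁻¹^n : ℝ≥0∞) ≤ 1 := pow_le_one₀ (by norm_num) (by norm_num)
    simp [tsub_add_cancel_of_le hle]
  · -- SuperPoly of μ n {true}
    intro p hc hp
    obtain ⟨N, hN⟩ := poly_le_two_pow p hc
    refine ⟨max N 1, fun n hn => ?_⟩
    have hn1 : 1 ≤ n := le_trans (le_max_right _ _) hn
    have hnN : N ≤ n := le_trans (le_max_left _ _) hn
    have hA : ((((1:ℝ≥0∞) - 2⁻¹^n) • Measure.dirac true +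
        (2⁻¹^n : ℝ≥0∞) • Measure.dirac false) {true}) = 1 - 2⁻¹^n := by
      simp [Measure.dirac_apply]
    have hle : (2⁻¹^n : ℝ≥0∞) ≤ 1 := pow_le_one₀ (by norm_num) (by norm_num)
    have htr : ((1 : ℝ≥0∞) - 2⁻¹^n).toReal = 1 - (2⁻¹:ℝ)^n := by
      rw [ENNReal.toReal_sub_of_le hle (by norm_num)]
      simp [ENNReal.toReal_pow]
    simp only [hA, htr]
    have hpp := poly_pos_of_pos_coeff p hc hp hn1
    have h2 := hN n hnN
    have h2pos : (0:ℝ) < 2^n := by positivity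
    have key : (2⁻¹:ℝ)^n ≤ 1 / p.eval (n:ℝ) := by
      rw [inv_pow, ← one_div, div_le_div_iff₀ h2pos hpp, one_mul, one_mul]
      exact h2
    linarith
  · -- failure for condProb
    intro h
    obtain ⟨N, hN⟩ := h Polynomial.X (fun i => by
      by_cases hi : 1 = i <;> simp [Polynomial.coeff_X, hi])
      Polynomial.X_ne_zero
    have h2 := hN (max N 2) (le_max_left _ _)
    have hco : ({true}ᶜ : Set Bool) = {false} := by
      ext b; cases b <;> simp
    have hAc : ((((1:ℝ≥0∞) - 2⁻¹^(max N 2)) • Measure.dirac true +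
        (2⁻¹^(max N 2) : ℝ≥0∞) • Measure.dirac false) ({true}ᶜ)) = 2⁻¹^(max N 2) := by
      rw [hco]; simp [Measure.dirac_apply]
    have hne : (2⁻¹^(max N 2) : ℝ≥0∞) ≠ 0 := by
      apply pow_ne_zero; norm_num
    have hint : ({true} ∩ {true}ᶜ : Set Bool) = ∅ := inter_compl_self _
    have hcp : condProb ((((1:ℝ≥0∞) - 2⁻¹^(max N 2)) • Measure.dirac true +
        (2⁻¹^(max N 2) : ℝ≥0∞) • Measure.dirac false)) {true} ({true}ᶜ) = 0 := by
      rw [condProb, if_neg (by rw [hAc]; exact hne), hint]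
      simp
    simp only [hcp, Polynomial.eval_X] at h2
    have hn2 : (2:ℝ) ≤ (max N 2 : ℕ) := by exact_mod_cast le_max_right N 2
    have : 1 / ((max N 2 : ℕ) : ℝ) ≤ 1/2 := by
      apply one_div_le_one_div_of_le <;> linarith
    linarith
end
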